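/- arXiv:1112.0424 — 2 statements merged into one kernel-verified Lean document; each statement's English description precedes it below -/
import Mathlib

section
/- Let 𝔰 be the 4-dimensional solvable Lie algebra with basis H,F₁,F₂,F₃ and brackets [H,F₁]=−2F₁, [H,F₂]=−F₂, [H,F₃]=−F₃, [F₂,F₃]=F₁, equipped with the pseudo-Riemannian metric g̃ with g̃(H,H)=h, g̃(F₁,F₁)=g̃(F₂,F₂)=1, g̃(F₃,F₃)=−1 (off-diagonal zero), h ≠ 0. Then the Ricci tensor satisfies Rc(H,H)=−6, Rc(F₁,F₁)=−8/h−1/2, Rc(F₂,F₂)=−4/h+1/2, Rc(F₃,F₃)=4/h−1/2, and g̃ is Einstein if and only if h = −4, in which case Rc = (3/2)g̃. -/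
noncomputable section

/-- The underlying space of the 4-dimensional solvable extension `𝔰 = ℝH ⊕ 𝔥₃`,
with basis `H = oe 0`, `F₁ = oe 1`, `F₂ = oe 2`, `F₃ = oe 3`. -/
abbrev V4 : Type := Fin 4 → ℝ

def oe (i : Fin 4) : V4 := Pi.single i 1

/-- Brackets: `[H,F₁] = −2F₁`, `[H,F₂] = −F₂`, `[H,F₃] = −F₃`, `[F₂,F₃] = F₁`. -/
def br (x y : V4) : V4 := fun i =>
  if i = 1 then -2 * (x 0 * y 1 - x 1 * y 0) + (x 2 * y 3 - x 3 * y 2)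
  else if i = 2 then -(x 0 * y 2 - x 2 * y 0)
  else if i = 3 then -(x 0 * y 3 - x 3 * y 0)
  else 0

/-- The metric `g̃`: `g̃(H,H) = h`, `g̃(F₁,F₁) = g̃(F₂,F₂) = 1`, `g̃(F₃,F₃) = −1`. -/
def gS (h : ℝ) (x y : V4) : ℝ := h * (x 0 * y 0) + x 1 * y 1 + x 2 * y 2 - x 3 * y 3

/-- Koszul formula for the left-invariant Levi-Civita connection of `g̃`. -/
def Koszul (h : ℝ) (nab : V4 →ₗ[ℝ] V4 →ₗ[ℝ] V4) : Prop :=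
  ∀ x y z : V4,
    2 * gS h (nab x y) z = gS h (br x y) z - gS h (br y z) x + gS h (br z x) y

/-- Curvature tensor `R(X,Y)Z = ∇_X∇_Y Z − ∇_Y∇_X Z − ∇_{[X,Y]}Z`. -/
def Rcurv (nab : V4 →ₗ[ℝ] V4 →ₗ[ℝ] V4) (x y z : V4) : V4 :=
  nab x (nab y z) - nab y (nab x z) - nab (br x y) z

/-- Ricci tensor `Rc(X,Y) = tr (Z ↦ R(Z,X)Y)`, written as a coordinate trace over the
standard basis (for an orthogonal basis this is `Σᵢ g(R(eᵢ,X)Y,eᵢ)/g(eᵢ,eᵢ)`). -/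
def Rc (nab : V4 →ₗ[ℝ] V4 →ₗ[ℝ] V4) (x y : V4) : ℝ :=
  ∑ i : Fin 4, (Rcurv nab (oe i) x y) i

set_option maxHeartbeats 1000000 in
/-- for the solvable extension of `(𝔥₃, g₁)` with `g̃(H,H) = h ≠ 0`, the
Ricci tensor satisfies `Rc(H,H) = −6`, `Rc(F₁,F₁) = −8/h − 1/2`,
`Rc(F₂,F₂) = −4/h + 1/2`, `Rc(F₃,F₃) = 4/h − 1/2`, the off-diagonal components vanish,
and `g̃` is Einstein iff `h = −4`, in which case `Rc = (3/2) g̃`. -/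
theorem solvable_extension_h3_einstein (h : ℝ) (hh : h ≠ 0)
    (nab : V4 →ₗ[ℝ] V4 →ₗ[ℝ] V4) (hK : Koszul h nab) :
    Rc nab (oe 0) (oe 0) = -6 ∧
    Rc nab (oe 1) (oe 1) = -8 / h - 1 / 2 ∧
    Rc nab (oe 2) (oe 2) = -4 / h + 1 / 2 ∧
    Rc nab (oe 3) (oe 3) = 4 / h - 1 / 2 ∧
    (∀ i j : Fin 4, i ≠ j → Rc nab (oe i) (oe j) = 0) ∧
    ((∃ lam : ℝ, ∀ x y : V4, Rc nab x y = lam * gS h x y) ↔ h = -4) ∧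
    (h = -4 → ∀ x y : V4, Rc nab x y = (3 / 2) * gS h x y) := by
  have key0 : ∀ x y : V4, nab x y 0 = (-2 * (x 1 * y 1) - x 2 * y 2 + x 3 * y 3) / h := by
    intro x y
    have e := hK x y (oe 0)
    simp [gS, br, oe, Pi.single_apply] at e
    field_simp
    linarith
  have key1 : ∀ x y : V4, nab x y 1 = 2 * (x 1 * y 0) + (x 2 * y 3 - x 3 * y 2) / 2 := by
    intro x y
    have e := hK x y (oe 1)
    simp [gS, br, oe, Pi.single_apply] at e
    linarith
  have key2 : ∀ x y : V4, nab x y 2 = x 2 * y 0 + (x 1 * y 3 + x 3 * y 1) / 2 := by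
    intro x y
    have e := hK x y (oe 2)
    simp [gS, br, oe, Pi.single_apply] at e
    linarith
  have key3 : ∀ x y : V4, nab x y 3 = x 3 * y 0 + (x 1 * y 2 + x 2 * y 1) / 2 := by
    intro x y
    have e := hK x y (oe 3)
    simp [gS, br, oe, Pi.single_apply] at e
    linarith
  have master : ∀ x y : V4, Rc nab x y =
      -6 * (x 0 * y 0) + (-8/h - 1/2) * (x 1 * y 1)
        + (-4/h + 1/2) * (x 2 * y 2) + (4/h - 1/2) * (x 3 * y 3) := by
    intro x y
    simp only [Rc, Rcurv, Fin.sum_univ_four, Pi.sub_apply, key0, key1, key2, key3,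
      br, oe, Pi.single_apply, Fin.reduceEq, reduceIte]
    field_simp
    ring
  refine ⟨?_, ?_, ?_, ?_, ?_, ⟨?_, ?_⟩, ?_⟩
  · simp [master, oe, Pi.single_apply]
  · simp [master, oe, Pi.single_apply]
  · simp [master, oe, Pi.single_apply]
  · simp [master, oe, Pi.single_apply]
  · intro i j hij
    fin_cases i <;> fin_cases j <;> simp_all [master, oe, Pi.single_apply]
  · rintro ⟨lam, hl⟩
    have a := hl (oe 1) (oe 1)
    have b := hl (oe 2) (oe 2)
    simp [master, gS, oe, Pi.single_apply] at a b
    have hc : (-8/h - 2⁻¹ : ℝ) = -4/h + 2⁻¹ := by rw [a, b]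
    field_simp at hc
    linarith
  · intro h4
    subst h4
    exact ⟨3/2, fun x y => by rw [master]; simp [gS]; ring⟩
  · intro h4 x y
    subst h4
    rw [master]; simp [gS]; ring
end
end

section
/- Let 𝔰 = ℝH ⊕ 𝔥₃ be the solvable extension with brackets [H,F₁]=−2F₁, [H,F₂]=−F₂, [H,F₃]=−F₃, [F₂,F₃]=F₁ and metric g̃ with g̃(H,H)=−4, g̃(F₁,F₁)=g̃(F₂,F₂)=1, g̃(F₃,F₃)=−1. Then g̃ is Einstein with Rc = (3/2) g̃, i.e., the Lorentzian nilsoliton g₁ on 𝔥₃ admits a one-dimensional metric solvable extension that is Einstein with Einstein constant equal to the soliton constant 3/2. -/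
noncomputable section

/-- Explicit formula for the Levi-Civita connection determined by the Koszul formula. -/
def Nb (x y : V4) : V4 :=
  ![(1/2) * (x 1 * y 1) + (1/4) * (x 2 * y 2) - (1/4) * (x 3 * y 3),
    2 * (x 1 * y 0) + (1/2) * (x 2 * y 3) - (1/2) * (x 3 * y 2),
    (1/2) * (x 1 * y 3) + x 2 * y 0 + (1/2) * (x 3 * y 1),
    (1/2) * (x 1 * y 2) + (1/2) * (x 2 * y 1) + x 3 * y 0]

theorem nab_eq_Nb (nab : V4 →ₗ[ℝ] V4 →ₗ[ℝ] V4) (hK : Koszul (-4) nab) :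
    ∀ x y : V4, nab x y = Nb x y := by
  intro x y
  funext i
  fin_cases i
  · have h := hK x y (oe 0)
    simp [gS, br, oe, Pi.single_apply, Nb] at h ⊢
    linarith
  · have h := hK x y (oe 1)
    simp [gS, br, oe, Pi.single_apply, Nb] at h ⊢
    linarith
  · have h := hK x y (oe 2)
    simp [gS, br, oe, Pi.single_apply, Nb] at h ⊢
    linarith
  · have h := hK x y (oe 3)
    simp [gS, br, oe, Pi.single_apply, Nb] at h ⊢
    linarith

/-- the metric solvable extension `𝔰 = ℝH ⊕ 𝔥₃` with `g̃(H,H) = −4` is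
Einstein with `Rc = (3/2) g̃`: the Lorentzian nilsoliton `g₁` on 𝔥₃ admits a
one-dimensional metric solvable extension that is Einstein with Einstein constant `3/2`. -/
theorem solvable_extension_h3_is_einstein
    (nab : V4 →ₗ[ℝ] V4 →ₗ[ℝ] V4) (hK : Koszul (-4) nab) :
    ∀ x y : V4, Rc nab x y = (3 / 2) * gS (-4) x y := by
  intro x y
  have hN := nab_eq_Nb nab hK
  unfold Rc Rcurv
  simp only [hN]
  simp [Fin.sum_univ_four, Nb, br, gS, oe, Pi.single_apply, Pi.sub_apply]
  ring
end
end
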